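/- Let c_min < c_max be real numbers, let n ≥ m ≥ 1 be integers, and let Z be a multiset of m real numbers with each element in [c_min, c_max]. Then the mapping sending Z to the vector (∑_{z ∈ Z} ((z − c_min)/(c_max − c_min))^k)_{k=1,...,n} ∈ ℝ^n is injective on multisets of cardinality m with elements in [c_min, c_max]: two distinct such multisets are sent to distinct vectors. -/

import Mathlib

/-!
Min–max scaling is injective, so it suffices that a multiset of `m` elements of a
characteristic-zero domain is determined by its first `m` power sums. Newton's identities recover
the elementary symmetric functions `e₁, …, eₘ` from these power sums, and up to sign these are
the coefficients of `∏ (X - z)`, whose multiset of roots is the multiset itself.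
-/

open Polynomial

namespace Multiset

variable {R : Type*} [CommRing R]

theorem mul_esymm_eq_sum (s : Multiset R) (k : ℕ) :
    k * s.esymm k = (-1) ^ (k + 1) *
      ∑ a ∈ Finset.HasAntidiagonal.antidiagonal k with a.1 < k,
        (-1) ^ a.1 * s.esymm a.1 * (s.map (· ^ a.2)).sum := by
  obtain ⟨l, rfl⟩ := Quot.exists_rep s
  have hl : Finset.univ.val.map l.get = (l : Multiset R) := by
    rw [Fin.univ_val_map, List.ofFn_get]
  have hpsum (j : ℕ) : MvPolynomial.aeval l.get (MvPolynomial.psum (Fin l.length) R j) =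
      ((l : Multiset R).map (· ^ j)).sum := by
    simp only [MvPolynomial.psum, map_sum, map_pow, MvPolynomial.aeval_X, ← hl, map_map]
    rfl
  have newton := congrArg (MvPolynomial.aeval l.get)
    (MvPolynomial.mul_esymm_eq_sum (Fin l.length) R k)
  simp only [map_mul, map_pow, map_neg, map_one, map_sum, map_natCast,
    MvPolynomial.aeval_esymm_eq_multiset_esymm, hl, hpsum] at newton
  exact newton

variable [IsDomain R]

theorem esymm_eq_of_sum_pow_eq [CharZero R] {s t : Multiset R} {m : ℕ}
    (h : ∀ j ∈ Finset.Icc 1 m, (s.map (· ^ j)).sum = (t.map (· ^ j)).sum) :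
    ∀ k ≤ m, s.esymm k = t.esymm k := by
  intro k
  induction k using Nat.strong_induction_on with
  | _ k ih =>
    intro hkm
    rcases k.eq_zero_or_pos with rfl | hk
    · simp [esymm]
    refine mul_left_cancel₀ (Nat.cast_ne_zero.mpr hk.ne') ?_
    rw [mul_esymm_eq_sum, mul_esymm_eq_sum]
    congr 1
    refine Finset.sum_congr rfl fun a ha => ?_
    rw [Finset.mem_filter, Finset.HasAntidiagonal.mem_antidiagonal] at ha
    rw [ih a.1 ha.2 (by omega), h a.2 (Finset.mem_Icc.mpr ⟨by omega, by omega⟩)]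

theorem eq_of_esymm_eq {s t : Multiset R} (hcard : card s = card t)
    (h : ∀ k ≤ card s, s.esymm k = t.esymm k) : s = t := by
  have hprod : (s.map fun a => X - C a).prod = (t.map fun a => X - C a).prod := by
    rw [prod_X_sub_X_eq_sum_esymm, prod_X_sub_X_eq_sum_esymm, ← hcard]
    exact Finset.sum_congr rfl fun k hk => by
      rw [h k (Nat.lt_succ_iff.mp (Finset.mem_range.mp hk))]
  simpa only [roots_multiset_prod_X_sub_C] using congrArg roots hprod

theorem eq_of_sum_pow_eq [CharZero R] {s t : Multiset R} (hcard : card s = card t)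
    (h : ∀ j ∈ Finset.Icc 1 (card s), (s.map (· ^ j)).sum = (t.map (· ^ j)).sum) : s = t :=
  eq_of_esymm_eq hcard (esymm_eq_of_sum_pow_eq h)

end Multiset

/-- The sum-of-power mapping applied to the min–max–scaled multiset:
sends `Z` to `(∑_{z∈Z} ((z - cmin)/(cmax - cmin))^k)_{k=1,…,n}`. -/
noncomputable def scaledSumOfPower (cmin cmax : ℝ) (n : ℕ) (Z : Multiset ℝ) :
    Fin n → ℝ :=
  fun k => (Z.map (fun z => ((z - cmin) / (cmax - cmin)) ^ (k.val + 1))).sum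

theorem scaledSumOfPower_injective_general (cmin cmax : ℝ) (hc : cmin < cmax)
    (n m : ℕ) (hnm : m ≤ n)
    (Z₁ Z₂ : Multiset ℝ)
    (hcard₁ : Multiset.card Z₁ = m) (hcard₂ : Multiset.card Z₂ = m)
    (hne : Z₁ ≠ Z₂) :
    scaledSumOfPower cmin cmax n Z₁ ≠ scaledSumOfPower cmin cmax n Z₂ := by
  intro heq
  have hscale : Function.Injective fun z : ℝ => (z - cmin) / (cmax - cmin) :=
    fun a b hab => sub_left_injective ((div_left_inj' (sub_ne_zero.mpr hc.ne')).mp hab)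
  refine hne (Multiset.map_injective hscale (Multiset.eq_of_sum_pow_eq
    (by simp only [Multiset.card_map, hcard₁, hcard₂]) fun j hj => ?_))
  rw [Multiset.card_map, hcard₁, Finset.mem_Icc] at hj
  obtain ⟨k, rfl⟩ : ∃ k, j = k + 1 := ⟨j - 1, by omega⟩
  simpa only [scaledSumOfPower, Multiset.map_map, Function.comp_def] using
    congrFun heq ⟨k, by omega⟩

/-- Injectivity of the min–max–scaled sum-of-power mapping on multisets of
cardinality `m` with elements in `[cmin, cmax]`, provided `n ≥ m ≥ 1`. -/
theorem scaledSumOfPower_injective (cmin cmax : ℝ) (hc : cmin < cmax)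
    (n m : ℕ) (hm : 1 ≤ m) (hnm : m ≤ n)
    (Z₁ Z₂ : Multiset ℝ)
    (hcard₁ : Multiset.card Z₁ = m) (hcard₂ : Multiset.card Z₂ = m)
    (hmem₁ : ∀ z ∈ Z₁, z ∈ Set.Icc cmin cmax)
    (hmem₂ : ∀ z ∈ Z₂, z ∈ Set.Icc cmin cmax)
    (hne : Z₁ ≠ Z₂) :
    scaledSumOfPower cmin cmax n Z₁ ≠ scaledSumOfPower cmin cmax n Z₂ :=
  scaledSumOfPower_injective_general cmin cmax hc n m hnm Z₁ Z₂ hcard₁ hcard₂ hne
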